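/- arXiv:2407.09881 — 4 statements merged into one kernel-verified Lean document; each statement's English description precedes it below -/
import Mathlib

section
/- Let R be a commutative ring, let d ≥ 1, c ≥ 1, m ≥ 1 be integers, and let X be an invertible d × d matrix over R. Let B be a (c·d) × ((c−1)·d) matrix and Y₁, Y₂ be (c·d) × d matrices over R. Let M be the square matrix of size (c + 2m)·d defined in block form as follows: the columns are grouped as the (c−1) block columns of B followed by 2m+1 block columns of width d; the first c·d rows consist of B, then Y₁ in the first of the 2m+1 block columns, Y₂ in the last of them, and zeros in between; the remaining 2m·d rows are zero in the block columns of B, and for i = 1, …, 2m the i-th of these block rows has I_d in the i-th of the 2m+1 block columns and X^{ε(i)} in the (i+1)-st, where ε(i) = 1 if i is odd and ε(i) = −1 if i is even, with zeros elsewhere. Then det M = det N, where N is the (c·d) × (c·d) matrix with block columns B and Y₁ + Y₂ placed side by side. -/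
/-!
The block column `K = (I, -X⁻¹, I, -X⁻¹, …, I)` is annihilated by the band, since block row `i`
reads `K_i + X^{±1} K_{i+1} = 0`, and the top rows send it to `Y₁ + Y₂`. Adding to the first
band block column the later ones multiplied by the blocks of `K` is a unimodular column
operation turning that column into `(Y₁ + Y₂, 0)`. The matrix is then block upper triangular
with diagonal blocks `[B | Y₁ + Y₂]` and the band without its first block column; the latter is
block lower bidiagonal with diagonal blocks `X, X⁻¹, …, X⁻¹`, so its determinant is `1`.
-/

open Matrix

/-- The bidiagonal band of `2m` block rows and `2m+1` block columns with identity blocks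
`I_d` on the diagonal and alternately `X`, `X⁻¹` on the superdiagonal (block row `i`,
`0`-indexed, carries `I_d` in block column `i` and `X` (if `i` is even) or `X⁻¹`
(if `i` is odd) in block column `i+1`). -/
noncomputable def twistBand {R : Type*} [CommRing R] (d m : ℕ) (X : Matrix (Fin d) (Fin d) R) :
    Matrix (Fin (2 * m) × Fin d) (Fin (2 * m + 1) × Fin d) R :=
  fun ir js =>
    if (js.1 : ℕ) = (ir.1 : ℕ) then (1 : Matrix (Fin d) (Fin d) R) ir.2 js.2
    else if (js.1 : ℕ) = (ir.1 : ℕ) + 1 then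
      (if (ir.1 : ℕ) % 2 = 0 then X else X⁻¹) ir.2 js.2
    else 0

/-- The `(c·d) × ((2m+1)·d)` block row with `Y₁` in the first of the `2m+1` block columns,
`Y₂` in the last one, and zeros in between. -/
def twistTop {R : Type*} [CommRing R] (cd d m : ℕ)
    (Y₁ Y₂ : Matrix (Fin cd) (Fin d) R) :
    Matrix (Fin cd) (Fin (2 * m + 1) × Fin d) R :=
  fun r js =>
    if (js.1 : ℕ) = 0 then Y₁ r js.2
    else if (js.1 : ℕ) = 2 * m then Y₂ r js.2
    else 0

theorem Finset.prod_range_two_mul {M : Type*} [CommMonoid M] (f : ℕ → M) (n : ℕ) :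
    ∏ i ∈ range (2 * n), f i = ∏ j ∈ range n, f (2 * j) * f (2 * j + 1) := by
  induction n with
  | zero => simp
  | succ n ih => rw [mul_add_one, prod_range_succ, prod_range_succ, prod_range_succ, ih, mul_assoc]

section

variable {R : Type*} [CommRing R]

namespace Matrix

theorem det_fromBlocks_eq_of_add_mul_eq_zero {m n : Type*} [Fintype m] [DecidableEq m]
    [Fintype n] [DecidableEq n] (A : Matrix m m R) (B : Matrix m n R) (C : Matrix n m R)
    (D : Matrix n n R) (K : Matrix n m R) (hK : C + D * K = 0) :
    (fromBlocks A B C D).det = (A + B * K).det * D.det := by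
  have h : fromBlocks A B C D * fromBlocks 1 0 K 1 = fromBlocks (A + B * K) B 0 D := by
    simp [fromBlocks_multiply, hK]
  rw [← det_fromBlocks_zero₂₁, ← h, det_mul, det_fromBlocks_zero₁₂, det_one, det_one, mul_one,
    mul_one]

theorem det_submatrix_equiv_comp {m n o : Type*} [Fintype m] [DecidableEq m] [Fintype o]
    [DecidableEq o] (A : Matrix m n R) (e : o ≃ m) (f : m → n) :
    (A.submatrix e (f ∘ e)).det = (A.submatrix id f).det :=
  det_submatrix_equiv_self e (A.submatrix id f)

theorem BlockTriangular.det_fst {ι α : Type*} [Fintype ι] [LinearOrder ι] [Fintype α]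
    [DecidableEq α] {M : Matrix (ι × α) (ι × α) R} (hM : M.BlockTriangular Prod.fst) :
    M.det = ∏ i, (M.submatrix (Prod.mk i) (Prod.mk i)).det := by
  refine hM.det_fintype.trans (Finset.prod_congr rfl fun i _ => ?_)
  let e : α ≃ {a : ι × α // a.1 = i} :=
    { toFun := fun s => ⟨(i, s), rfl⟩
      invFun := fun a => a.1.2
      left_inv := fun _ => rfl
      right_inv := by rintro ⟨⟨_, _⟩, rfl⟩; rfl }
  rw [← det_submatrix_equiv_self e]
  rfl

theorem mul_eq_submatrix_zero_add_submatrix_succ {ρ α β : Type*} [Fintype α] {n : ℕ}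
    (T : Matrix ρ (Fin (n + 1) × α) R) (K : Matrix (Fin (n + 1) × α) β R) :
    T * K = T.submatrix id (Prod.mk 0) * K.submatrix (Prod.mk 0) id +
      T.submatrix id (Prod.map Fin.succ id) * K.submatrix (Prod.map Fin.succ id) id := by
  ext r u
  simp [mul_apply, Fintype.sum_prod_type, Fin.sum_univ_succ]

theorem fromCols_add_mul_fromCols_zero {ρ κ α ι : Type*} [Fintype α] [DecidableEq α]
    {n : ℕ} (F : Matrix ρ κ R) (T : Matrix ρ (Fin (n + 1) × α) R)
    (K : Matrix (Fin (n + 1) × α) α R) (hK : K.submatrix (Prod.mk 0) id = 1) (e : ι → κ ⊕ α) :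
    (fromCols F (T.submatrix id (Prod.mk 0))).submatrix id e +
        T.submatrix id (Prod.map Fin.succ id) *
          (fromCols 0 (K.submatrix (Prod.map Fin.succ id) id)).submatrix id e =
      (fromCols F (T * K)).submatrix id e := by
  rw [mul_eq_submatrix_zero_add_submatrix_succ T K, hK, Matrix.mul_one]
  ext r i
  simp only [add_apply, submatrix_apply, id_eq, mul_apply]
  rcases e i with a | t <;> simp [mul_apply]

end Matrix

def finSuccMulEquiv (k d : ℕ) : Fin ((k + 1) * d) ≃ Fin (k * d) ⊕ Fin d :=
  (finCongr (add_one_mul k d)).trans finSumFinEquiv.symm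

/-- The columns of the twist matrix regrouped as those of `[B | Y₁]` (the columns of `B` followed
by the first band block column) and those of the band without its first block column. -/
def twistColumnMap (k d n : ℕ) :
    Fin ((k + 1) * d) ⊕ Fin n × Fin d → Fin (k * d) ⊕ Fin (n + 1) × Fin d :=
  Sum.elim (fun a => (finSuccMulEquiv k d a).map id (Prod.mk 0))
    (fun p => .inr (Prod.map Fin.succ id p))

theorem twistColumnMap_comp (k d n : ℕ) (h : (k + 1) * d + n * d = k * d + (n + 1) * d) :
    ⇑(finSumFinEquiv.symm.trans
        (Equiv.sumCongr (Equiv.refl (Fin (k * d))) finProdFinEquiv.symm)) ∘ ⇑(finCongr h) =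
      twistColumnMap k d n ∘
        ⇑(finSumFinEquiv.symm.trans
          (Equiv.sumCongr (Equiv.refl (Fin ((k + 1) * d))) finProdFinEquiv.symm)) := by
  funext x
  obtain ⟨y, rfl⟩ := (finSumFinEquiv.symm.trans (Equiv.sumCongr (Equiv.refl (Fin ((k + 1) * d)))
    (finProdFinEquiv (m := n) (n := d)).symm)).symm.surjective x
  rw [Function.comp_apply, Function.comp_apply, Equiv.apply_symm_apply, ← Equiv.eq_symm_apply]
  rcases y with a | ⟨i, s⟩
  · obtain ⟨z, rfl⟩ := (finSuccMulEquiv k d).symm.surjective a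
    rcases z with b | t
    · ext; simp [twistColumnMap, finSuccMulEquiv]
    · ext; simp [twistColumnMap, finSuccMulEquiv, finProdFinEquiv]
  · ext; simp [twistColumnMap, finProdFinEquiv]; ring

theorem fromBlocks_submatrix_twistColumnMap {ρ : Type*} (k d n : ℕ)
    (B : Matrix (Fin ((k + 1) * d)) (Fin (k * d)) R)
    (T : Matrix (Fin ((k + 1) * d)) (Fin (n + 1) × Fin d) R)
    (L : Matrix ρ (Fin (n + 1) × Fin d) R) :
    (fromBlocks B T 0 L).submatrix id (twistColumnMap k d n) =
      fromBlocks ((fromCols B (T.submatrix id (Prod.mk 0))).submatrix id (finSuccMulEquiv k d))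
        (T.submatrix id (Prod.map Fin.succ id))
        ((fromCols 0 (L.submatrix id (Prod.mk 0))).submatrix id (finSuccMulEquiv k d))
        (L.submatrix id (Prod.map Fin.succ id)) := by
  ext (r | r) (a | p)
  · simp only [twistColumnMap, submatrix_apply, id_eq, Sum.elim_inl, fromBlocks_apply₁₁]
    rcases finSuccMulEquiv k d a with b | t <;> rfl
  · rfl
  · simp only [twistColumnMap, submatrix_apply, id_eq, Sum.elim_inl, fromBlocks_apply₂₁]
    rcases finSuccMulEquiv k d a with b | t <;> rfl
  · rfl

noncomputable def twistKernelBlock {d : ℕ} (X : Matrix (Fin d) (Fin d) R) (i : ℕ) :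
    Matrix (Fin d) (Fin d) R :=
  if i % 2 = 0 then 1 else -X⁻¹

noncomputable def twistKernel (n d : ℕ) (X : Matrix (Fin d) (Fin d) R) :
    Matrix (Fin n × Fin d) (Fin d) R :=
  fun js => twistKernelBlock X js.1 js.2

theorem twistKernelBlock_of_mod_two_eq_zero {d : ℕ} (X : Matrix (Fin d) (Fin d) R) {i : ℕ}
    (hi : i % 2 = 0) : twistKernelBlock X i = 1 :=
  if_pos hi

theorem twistKernelBlock_add_mul_succ {d : ℕ} {X : Matrix (Fin d) (Fin d) R} (hX : IsUnit X)
    (i : ℕ) :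
    twistKernelBlock X i + (if i % 2 = 0 then X else X⁻¹) * twistKernelBlock X (i + 1) = 0 := by
  have hXX : X * X⁻¹ = 1 := mul_nonsing_inv X ((isUnit_iff_isUnit_det X).mp hX)
  rcases Nat.mod_two_eq_zero_or_one i with h | h <;>
    simp [twistKernelBlock, h, Nat.add_mod, hXX]

theorem twistKernel_submatrix_zero (n d : ℕ) (X : Matrix (Fin d) (Fin d) R) :
    (twistKernel (n + 1) d X).submatrix (Prod.mk 0) id = 1 :=
  twistKernelBlock_of_mod_two_eq_zero (i := 0) X rfl

theorem twistBand_apply (d m : ℕ) (X : Matrix (Fin d) (Fin d) R) (p : Fin (2 * m)) (t : Fin d)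
    (j : Fin (2 * m + 1)) (s : Fin d) :
    twistBand d m X (p, t) (j, s) =
      (if j = p.castSucc then (1 : Matrix (Fin d) (Fin d) R) t s else 0) +
        (if j = p.succ then (if (p : ℕ) % 2 = 0 then X else X⁻¹) t s else 0) := by
  simp only [twistBand, Fin.ext_iff, Fin.val_castSucc, Fin.val_succ]
  split_ifs <;> first | (exfalso; omega) | rfl | simp

theorem twistTop_apply (cd d m : ℕ) (hm : 1 ≤ m) (Y₁ Y₂ : Matrix (Fin cd) (Fin d) R)
    (r : Fin cd) (j : Fin (2 * m + 1)) (s : Fin d) :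
    twistTop cd d m Y₁ Y₂ r (j, s) =
      (if j = 0 then Y₁ r s else 0) + (if j = Fin.last (2 * m) then Y₂ r s else 0) := by
  simp only [twistTop, Fin.ext_iff, Fin.val_zero, Fin.val_last]
  split_ifs <;> first | (exfalso; omega) | simp

theorem twistBand_mul_twistKernel (d m : ℕ) {X : Matrix (Fin d) (Fin d) R} (hX : IsUnit X) :
    twistBand d m X * twistKernel (2 * m + 1) d X = 0 := by
  ext ⟨p, t⟩ u
  simp only [mul_apply, Fintype.sum_prod_type, twistBand_apply, add_mul, ite_mul, zero_mul,
    Finset.sum_add_distrib, Finset.sum_ite_irrel, Finset.sum_const_zero, Finset.sum_ite_eq',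
    Finset.mem_univ, if_true, twistKernel, Fin.val_castSucc, Fin.val_succ]
  rw [← mul_apply, ← mul_apply, one_mul, ← Matrix.add_apply, twistKernelBlock_add_mul_succ hX]
  rfl

theorem twistTop_mul_twistKernel (cd d m : ℕ) (hm : 1 ≤ m) (X : Matrix (Fin d) (Fin d) R)
    (Y₁ Y₂ : Matrix (Fin cd) (Fin d) R) :
    twistTop cd d m Y₁ Y₂ * twistKernel (2 * m + 1) d X = Y₁ + Y₂ := by
  ext r u
  simp only [mul_apply, Fintype.sum_prod_type, twistTop_apply cd d m hm, add_mul, ite_mul,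
    zero_mul, Finset.sum_add_distrib, Finset.sum_ite_irrel, Finset.sum_const_zero,
    Finset.sum_ite_eq', Finset.mem_univ, if_true, twistKernel, Fin.val_zero, Fin.val_last]
  rw [← mul_apply, ← mul_apply, twistKernelBlock_of_mod_two_eq_zero X rfl,
    twistKernelBlock_of_mod_two_eq_zero X (Nat.mul_mod_right 2 m), Matrix.mul_one,
    Matrix.mul_one, Matrix.add_apply]

theorem det_twistBand_submatrix_succ (d m : ℕ) {X : Matrix (Fin d) (Fin d) R} (hX : IsUnit X) :
    ((twistBand d m X).submatrix id (Prod.map Fin.succ id)).det = 1 := by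
  have hW : ((twistBand d m X).submatrix id (Prod.map Fin.succ id))ᵀ.BlockTriangular
      Prod.fst := by
    rintro ⟨j, s⟩ ⟨p, t⟩ (hpj : p < j)
    simp only [transpose_apply, submatrix_apply, id_eq, Prod.map_apply, twistBand_apply,
      Fin.ext_iff, Fin.val_succ, Fin.val_castSucc]
    rw [Fin.lt_def] at hpj
    rw [if_neg (by omega), if_neg (by omega), add_zero]
  have hdiag : ∀ p : Fin (2 * m),
      ((twistBand d m X).submatrix id (Prod.map Fin.succ id))ᵀ.submatrix (Prod.mk p)
        (Prod.mk p) = (if (p : ℕ) % 2 = 0 then X else X⁻¹)ᵀ := by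
    intro p
    ext s t
    simp [twistBand_apply, Fin.ext_iff]
  have hXX : X.det * X⁻¹.det = 1 := by
    rw [← det_mul, mul_nonsing_inv X ((isUnit_iff_isUnit_det X).mp hX), det_one]
  rw [← det_transpose, hW.det_fst]
  simp_rw [hdiag, det_transpose]
  rw [Fin.prod_univ_eq_prod_range (fun i => (if i % 2 = 0 then X else X⁻¹).det),
    Finset.prod_range_two_mul]
  exact Finset.prod_eq_one fun j _ => by
    rw [if_pos (Nat.mul_mod_right 2 j), if_neg (by omega), hXX]

end

/-- With `c = k + 1 ≥ 1`, `d ≥ 1`, `m ≥ 1`, `X` an invertible `d × d`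
matrix, `B` a `(c·d) × ((c−1)·d)` matrix and `Y₁, Y₂` `(c·d) × d` matrices over a
commutative ring `R`, the determinant of the square matrix of size `(c+2m)·d` formed by
the block columns of `B`, then the `2m+1` block columns carrying `Y₁, 0, …, 0, Y₂` in the
first `c·d` rows and the band `I_d, X^{±1}` in the remaining `2m·d` rows, equals the
determinant of the `(c·d) × (c·d)` matrix with block columns `B` and `Y₁ + Y₂`.
(All identifications of index sets with `Fin` of the appropriate size are the canonical
order-preserving ones.) -/
theorem det_eliminate_twist_band
    {R : Type*} [CommRing R] (d k m : ℕ) (hm : 1 ≤ m)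
    (X : Matrix (Fin d) (Fin d) R) (hX : IsUnit X)
    (B : Matrix (Fin ((k + 1) * d)) (Fin (k * d)) R)
    (Y₁ Y₂ : Matrix (Fin ((k + 1) * d)) (Fin d) R) :
    ((Matrix.fromBlocks B (twistTop ((k + 1) * d) d m Y₁ Y₂)
        (0 : Matrix (Fin (2 * m) × Fin d) (Fin (k * d)) R) (twistBand d m X)).submatrix
        (⇑(finSumFinEquiv.symm.trans
            (Equiv.sumCongr (Equiv.refl (Fin ((k + 1) * d))) finProdFinEquiv.symm)
            : Fin ((k + 1) * d + 2 * m * d) ≃ _))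
        (⇑(finSumFinEquiv.symm.trans
            (Equiv.sumCongr (Equiv.refl (Fin (k * d))) finProdFinEquiv.symm)) ∘
          ⇑(finCongr
            (show (k + 1) * d + 2 * m * d = k * d + (2 * m + 1) * d by ring)))).det =
    ((Matrix.fromCols B (Y₁ + Y₂)).submatrix
        id
        (⇑(finSumFinEquiv.symm : Fin (k * d + d) ≃ Fin (k * d) ⊕ Fin d) ∘
          ⇑(finCongr (show (k + 1) * d = k * d + d by ring)))).det := by
  have hK := twistKernel_submatrix_zero (2 * m) d X
  have hC := fromCols_add_mul_fromCols_zero 0 (twistBand d m X) _ hK (finSuccMulEquiv k d)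
  rw [twistBand_mul_twistKernel d m hX, fromCols_zero, submatrix_zero] at hC
  rw [twistColumnMap_comp, det_submatrix_equiv_comp, fromBlocks_submatrix_twistColumnMap,
    det_fromBlocks_eq_of_add_mul_eq_zero _ _ _ _ _ hC, fromCols_add_mul_fromCols_zero B _ _ hK,
    twistTop_mul_twistKernel _ d m hm, det_twistBand_submatrix_succ d m hX, mul_one]
  rfl
end

section
/- Let R be a commutative ring, let f ∈ R be a non-unit, and let M be an R-module such that every x ∈ M with f • x = 0 lies in the submodule f • M. Then R ⧸ (f) is not a retract of M: there do not exist R-linear maps s : R ⧸ (f) → M and π : M → R ⧸ (f) with π ∘ s = id. In particular, no surjective R-linear map M → R ⧸ (f) admits an R-linear section. -/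
/-- Let `R` be a commutative ring, `f ∈ R` a non-unit, and `M` an
`R`-module such that every `x ∈ M` with `f • x = 0` lies in `f • M`.  Then `R ⧸ (f)` is
not a retract of `M`: there are no `R`-linear maps `s : R ⧸ (f) → M` and
`π : M → R ⧸ (f)` with `π ∘ s = id`.  In particular no surjective `R`-linear map
`M → R ⧸ (f)` admits an `R`-linear section. -/
theorem quotient_not_retract_of_f_torsion_in_f_smul
    {R : Type*} [CommRing R] (f : R) (hf : ¬IsUnit f)
    (M : Type*) [AddCommGroup M] [Module R M]
    (hM : ∀ x : M, f • x = 0 → ∃ y : M, x = f • y) :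
    ¬∃ (s : (R ⧸ Ideal.span {f}) →ₗ[R] M)
        (π : M →ₗ[R] (R ⧸ Ideal.span {f})),
      π ∘ₗ s = LinearMap.id := by
  rintro ⟨s, π, hπs⟩
  set one : R ⧸ Ideal.span {f} := Ideal.Quotient.mk _ 1
  have hfe : f • s one = 0 := by
    rw [← map_smul]
    have : f • one = 0 := by
      show (Ideal.Quotient.mk _ (f * 1) : R ⧸ Ideal.span {f}) = 0
      rw [Ideal.Quotient.eq_zero_iff_mem]
      simpa using Ideal.mem_span_singleton_self f
    rw [this, map_zero]
  obtain ⟨y, hy⟩ := hM _ hfe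
  have h1 : one = f • π y := by
    have := congrArg (fun g => g one) hπs
    simp only [LinearMap.comp_apply, LinearMap.id_apply] at this
    rw [← this, hy, map_smul]
  have hfz : f • π y = 0 := by
    obtain ⟨r, hr⟩ := Ideal.Quotient.mk_surjective (π y)
    rw [← hr]
    show (Ideal.Quotient.mk _ (f * r) : R ⧸ Ideal.span {f}) = 0
    rw [Ideal.Quotient.eq_zero_iff_mem]
    exact Ideal.mul_mem_right r _ (Ideal.mem_span_singleton_self f)
  rw [hfz] at h1
  have : (1 : R) ∈ Ideal.span {f} := by
    rwa [← Ideal.Quotient.eq_zero_iff_mem]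
  rw [Ideal.mem_span_singleton] at this
  exact hf (isUnit_of_dvd_one this)
end

section
/- Let R be a commutative ring, let f ∈ R be a non-zero-divisor which is not a unit, and let n ≥ 2 be an integer. Then the R-module R ⧸ (f) is not a retract of R ⧸ (fⁿ): there do not exist R-linear maps s : R ⧸ (f) → R ⧸ (fⁿ) and π : R ⧸ (fⁿ) → R ⧸ (f) with π ∘ s = id. In particular, the natural surjection R ⧸ (fⁿ) → R ⧸ (f) admits no R-linear section. -/
/-!
If `s` is a section of `π`, then `x = s 1` is killed by `f`. As `f` is a non-zero-divisor, the
`f`-torsion of `R ⧸ (fⁿ)` is `fⁿ⁻¹ • (R ⧸ (fⁿ))`, so for `n ≥ 2` the element `x` is divisible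
by `f`, and hence `1 = π x` is divisible by `f` in `R ⧸ (f)`, i.e. vanishes there. This forces
`f` to be a unit.
-/

open Ideal

lemma Ideal.Quotient.exists_eq_pow_smul_of_smul_eq_zero {R : Type*} [CommRing R] {f : R}
    (hf : f ∈ nonZeroDivisors R) (m : ℕ) {y : R ⧸ span {f ^ (m + 1)}} (hy : f • y = 0) :
    ∃ z, y = f ^ m • z := by
  obtain ⟨a, rfl⟩ := Quotient.mk_surjective y
  rw [Algebra.smul_def, Quotient.algebraMap_eq, ← map_mul, Quotient.eq_zero_iff_mem,
    mem_span_singleton', pow_succ'] at hy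
  obtain ⟨b, hb⟩ := hy
  have hab : a = f ^ m * b :=
    ((mul_cancel_left_mem_nonZeroDivisors hf).mp (by rw [← hb]; ring)).symm
  exact ⟨Quotient.mk _ b, by rw [hab, Algebra.smul_def, Quotient.algebraMap_eq, ← map_mul]⟩

/-- Let `R` be a commutative ring, `f ∈ R` a non-zero-divisor which is
not a unit, and `n ≥ 2`.  Then the `R`-module `R ⧸ (f)` is not a retract of `R ⧸ (fⁿ)`:
there are no `R`-linear maps `s : R ⧸ (f) → R ⧸ (fⁿ)` and `π : R ⧸ (fⁿ) → R ⧸ (f)` with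
`π ∘ s = id`.  In particular the natural surjection `R ⧸ (fⁿ) → R ⧸ (f)` admits no
`R`-linear section. -/
theorem quotient_f_not_retract_of_quotient_f_pow
    {R : Type*} [CommRing R] (f : R)
    (hreg : f ∈ nonZeroDivisors R) (hf : ¬IsUnit f)
    (n : ℕ) (hn : 2 ≤ n) :
    ¬∃ (s : (R ⧸ Ideal.span {f}) →ₗ[R] (R ⧸ Ideal.span {f ^ n}))
        (π : (R ⧸ Ideal.span {f ^ n}) →ₗ[R] (R ⧸ Ideal.span {f})),
      π ∘ₗ s = LinearMap.id := by
  rintro ⟨s, π, hπs⟩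
  obtain ⟨m, rfl⟩ := Nat.exists_eq_add_of_le' hn
  have : Nontrivial (R ⧸ span {f}) :=
    Quotient.nontrivial_iff.mpr (mt span_singleton_eq_top.mp hf)
  have hkill {a : R} (ha : a ∈ span {f}) (y : R ⧸ span {f}) : a • y = 0 :=
    Module.mem_annihilator.mp (by rwa [annihilator_quotient]) y
  have hfs : f • s 1 = 0 := by rw [← map_smul, hkill (mem_span_singleton_self f), map_zero]
  obtain ⟨z, hz⟩ := Quotient.exists_eq_pow_smul_of_smul_eq_zero hreg (m + 1) hfs
  have hπs1 : π (s 1) = 1 := by rw [← LinearMap.comp_apply, hπs, LinearMap.id_apply]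
  refine one_ne_zero (hπs1.symm.trans ?_)
  rw [hz, map_smul]
  exact hkill (mem_span_singleton.mpr (dvd_pow_self f m.succ_ne_zero)) _
end

section
/- Let R = ℚ[t, t⁻¹] be the ring of Laurent polynomials over ℚ and let f = t² − t + 1 ∈ R. Then the R-module R ⧸ (f) is not a retract of the direct sum (R ⧸ (f²)) × (R ⧸ (f²)): there do not exist R-linear maps s : R ⧸ (f) → (R ⧸ (f²)) × (R ⧸ (f²)) and π : (R ⧸ (f²)) × (R ⧸ (f²)) → R ⧸ (f) with π ∘ s = id. -/
/-!
Write `f = t² − t + 1`. In `M = R ⧸ (f²)`, and hence in `M × M`, every element killed by `f` is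
divisible by `f`, because `R` is a domain and `f ≠ 0`. If `π ∘ s = id` with `N = R ⧸ (f)`, then for
`n ∈ N` the element `s n` is killed by `f`, so `s n = f • y` and `n = f • π y = 0`. Thus `N = 0`,
i.e. `f` is a unit of `R`; but `f` is the sixth cyclotomic polynomial, which vanishes at the unit
`exp (πi/3) ∈ ℂ`.
-/

open LaurentPolynomial

/-- The Laurent polynomial `t² − t + 1 ∈ ℚ[t, t⁻¹]`, the Alexander polynomial of the
trefoil knot. -/
noncomputable def trefoilAlexPoly : LaurentPolynomial ℚ := T 2 - T 1 + 1

open Polynomial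

section
variable {R : Type*} [CommRing R]

lemma Ideal.Quotient.span_singleton_smul_eq_zero (a : R) (x : R ⧸ Ideal.span {a}) : a • x = 0 := by
  obtain ⟨b, rfl⟩ := Ideal.Quotient.mk_surjective x
  rw [Algebra.smul_def, Ideal.Quotient.algebraMap_eq, ← map_mul, Ideal.Quotient.eq_zero_iff_mem]
  exact Ideal.mem_span_singleton.mpr (dvd_mul_right a b)

lemma Ideal.Quotient.exists_smul_eq_of_smul_eq_zero_span_sq [IsDomain R] {a : R} (ha : a ≠ 0)
    (x : R ⧸ Ideal.span {a ^ 2}) (hx : a • x = 0) : ∃ y, a • y = x := by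
  obtain ⟨b, rfl⟩ := Ideal.Quotient.mk_surjective x
  rw [Algebra.smul_def, Ideal.Quotient.algebraMap_eq, ← map_mul, Ideal.Quotient.eq_zero_iff_mem,
    Ideal.mem_span_singleton, sq, mul_dvd_mul_iff_left ha] at hx
  obtain ⟨c, rfl⟩ := hx
  exact ⟨Ideal.Quotient.mk _ c, by rw [Algebra.smul_def, Ideal.Quotient.algebraMap_eq, ← map_mul]⟩

variable {M M' N : Type*} [AddCommGroup M] [Module R M] [AddCommGroup M'] [Module R M']
  [AddCommGroup N] [Module R N]

lemma Prod.exists_smul_eq_of_smul_eq_zero {a : R} (hM : ∀ x : M, a • x = 0 → ∃ y, a • y = x)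
    (hM' : ∀ x : M', a • x = 0 → ∃ y, a • y = x) (x : M × M') (hx : a • x = 0) :
    ∃ y, a • y = x := by
  obtain ⟨y₁, hy₁⟩ := hM x.1 congr(($hx).1)
  obtain ⟨y₂, hy₂⟩ := hM' x.2 congr(($hx).2)
  exact ⟨(y₁, y₂), Prod.ext hy₁ hy₂⟩

lemma subsingleton_of_retract_of_smul_eq_zero {a : R} (hM : ∀ x : M, a • x = 0 → ∃ y, a • y = x)
    (hN : ∀ n : N, a • n = 0) (s : N →ₗ[R] M) (π : M →ₗ[R] N) (h : π ∘ₗ s = LinearMap.id) :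
    Subsingleton N := by
  refine subsingleton_of_forall_eq 0 fun n ↦ ?_
  obtain ⟨y, hy⟩ := hM (s n) (by rw [← map_smul, hN, map_zero])
  calc n = π (s n) := (LinearMap.congr_fun h n).symm
    _ = a • π y := by rw [← hy, map_smul]
    _ = 0 := hN _
end

lemma LaurentPolynomial.not_isUnit_toLaurent_of_eval₂_eq_zero {R S : Type*} [CommRing R]
    [CommRing S] [Nontrivial S] (f : R →+* S) (x : Sˣ) {p : R[X]} (hp : p.eval₂ f x = 0) :
    ¬IsUnit (toLaurent p) := fun h ↦ by
  simpa [eval₂_toLaurent, hp] using h.map (LaurentPolynomial.eval₂ f x)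

lemma trefoilAlexPoly_eq_toLaurent_cyclotomic : trefoilAlexPoly = toLaurent (cyclotomic 6 ℚ) := by
  simp [trefoilAlexPoly, cyclotomic_six, toLaurent_X_pow]

lemma trefoilAlexPoly_ne_zero : trefoilAlexPoly ≠ 0 := by
  rw [trefoilAlexPoly_eq_toLaurent_cyclotomic, map_ne_zero_iff _ toLaurent_injective]
  exact cyclotomic_ne_zero 6 ℚ

lemma not_isUnit_trefoilAlexPoly : ¬IsUnit trefoilAlexPoly := by
  have hζ := Complex.isPrimitiveRoot_exp 6 (by norm_num)
  rw [trefoilAlexPoly_eq_toLaurent_cyclotomic]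
  refine not_isUnit_toLaurent_of_eval₂_eq_zero (algebraMap ℚ ℂ) (hζ.isUnit (by norm_num)).unit ?_
  rw [IsUnit.unit_spec, eval₂_eq_eval_map, map_cyclotomic]
  exact hζ.isRoot_cyclotomic (by norm_num)

/-- For `R = ℚ[t, t⁻¹]` and `f = t² − t + 1`, the `R`-module `R ⧸ (f)`
is not a retract of `(R ⧸ (f²)) × (R ⧸ (f²))`: there are no `R`-linear maps
`s : R ⧸ (f) → (R ⧸ (f²)) × (R ⧸ (f²))` and `π : (R ⧸ (f²)) × (R ⧸ (f²)) → R ⧸ (f)` with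
`π ∘ s = id`. -/
theorem trefoil_module_not_retract_of_10_99_module :
    ¬∃ (s : (LaurentPolynomial ℚ ⧸ Ideal.span {trefoilAlexPoly}) →ₗ[LaurentPolynomial ℚ]
          ((LaurentPolynomial ℚ ⧸ Ideal.span {trefoilAlexPoly ^ 2}) ×
            (LaurentPolynomial ℚ ⧸ Ideal.span {trefoilAlexPoly ^ 2})))
        (π : ((LaurentPolynomial ℚ ⧸ Ideal.span {trefoilAlexPoly ^ 2}) ×
            (LaurentPolynomial ℚ ⧸ Ideal.span {trefoilAlexPoly ^ 2})) →ₗ[LaurentPolynomial ℚ]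
          (LaurentPolynomial ℚ ⧸ Ideal.span {trefoilAlexPoly})),
      π ∘ₗ s = LinearMap.id := by
  rintro ⟨s, π, h⟩
  have hM := Ideal.Quotient.exists_smul_eq_of_smul_eq_zero_span_sq trefoilAlexPoly_ne_zero
  have : Nontrivial (LaurentPolynomial ℚ ⧸ Ideal.span {trefoilAlexPoly}) := by
    rw [Ideal.Quotient.nontrivial_iff, ne_eq, Ideal.span_singleton_eq_top]
    exact not_isUnit_trefoilAlexPoly
  exact not_subsingleton _ <| subsingleton_of_retract_of_smul_eq_zero
    (Prod.exists_smul_eq_of_smul_eq_zero hM hM) (Ideal.Quotient.span_singleton_smul_eq_zero _) s π h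
end
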